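/- arXiv:2301.07937 — 3 statements merged into one kernel-verified Lean document; each statement's English description precedes it below -/
import Mathlib

section
/- For a function φ in H^2, the following are equivalent: (i) the Hankel operator H_φ has both minimal norm (‖H_φ‖ = ‖φ‖_2) and maximal norm (‖H_φ‖ = ‖φ‖_∞); (ii) ‖φ‖_2 = ‖φ‖_∞; (iii) |φ| is constant almost everywhere on the unit circle; (iv) φ = C·I for a constant C and an inner function I. -/
/-!
Setting: the unit circle `𝕋 = ℝ/2πℤ` with normalized Lebesgue arc length (Haar) measure `μ`.
`H^p` is the Hardy space of `L^p` functions whose Fourier coefficients are supported on the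
nonnegative integers.
-/

open MeasureTheory Complex Topology Filter Set
open scoped ENNReal ComplexConjugate Real

noncomputable section

/-- The circle `ℝ/2πℤ`, i.e. the unit circle parametrized by angle. -/
abbrev UnitCircle : Type := AddCircle (2 * Real.pi)

instance : Fact (0 < 2 * Real.pi) := ⟨Real.two_pi_pos⟩

/-- Normalized Lebesgue arc length measure on the unit circle. -/
local notation "μ" => (AddCircle.haarAddCircle : Measure UnitCircle)

/-- The point `e^{iθ}` of the complex unit circle corresponding to the angle `θ : ℝ/2πℤ`. -/
def bdryPt (x : UnitCircle) : ℂ := (AddCircle.toCircle x : ℂ)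

/-- Membership in the Hardy space `H^p`: an `L^p` function on the circle whose Fourier
coefficients are supported on the nonnegative integers. -/
def MemHardy (p : ℝ≥0∞) (f : UnitCircle → ℂ) : Prop :=
  MemLp f p μ ∧ ∀ n : ℤ, n < 0 → fourierCoeff f n = 0

/-- The `L²`-norm of the orthogonal projection `P̄ g` of `g` onto the conjugate Hardy space
`conj H²` (the closed span of the frequencies `n ≤ 0`), computed via Fourier coefficients and
valued in `ℝ≥0∞`.  For `g ∈ L²` this is `‖P̄ g‖₂`. -/
def negPartNorm (g : UnitCircle → ℂ) : ℝ≥0∞ :=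
  (∑' n : ℕ, (‖fourierCoeff g (-(n : ℤ))‖₊ : ℝ≥0∞) ^ 2) ^ (1 / 2 : ℝ)

/-- The norm of the densely defined Hankel operator `H_φ f = P̄ (conj φ · f)` with symbol
`φ ∈ H²`: the supremum of `‖H_φ f‖₂` over all bounded `f ∈ H²` in the unit ball of `H²`
(a dense subspace of its domain); valued in `ℝ≥0∞` since `H_φ` may be unbounded. -/
def hankelNorm (φ : UnitCircle → ℂ) : ℝ≥0∞ :=
  ⨆ (f : UnitCircle → ℂ) (_ : MemHardy ⊤ f) (_ : eLpNorm f 2 μ ≤ 1),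
    negPartNorm fun x => conj (φ x) * f x

lemma fourierCoeff_congr_ae' {f g : UnitCircle → ℂ} (h : f =ᵐ[μ] g) (n : ℤ) :
    fourierCoeff f n = fourierCoeff g n := by
  unfold fourierCoeff
  exact integral_congr_ae (h.mono fun x hx => by simp only [hx])

lemma fourierCoeff_conj' (f : UnitCircle → ℂ) (n : ℤ) :
    fourierCoeff (fun x => conj (f x)) n = conj (fourierCoeff f (-n)) := by
  unfold fourierCoeff
  rw [← integral_conj]
  refine integral_congr_ae (Eventually.of_forall fun t => ?_)
  simp only [smul_eq_mul, map_mul, neg_neg, ← fourier_neg]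

lemma fourierCoeff_one {n : ℤ} (hn : n ≠ 0) :
    fourierCoeff (fun _ : UnitCircle => (1 : ℂ)) n = 0 := by
  unfold fourierCoeff
  simp only [smul_eq_mul, mul_one]
  exact integral_eq_zero_of_add_right_eq_neg
    (fourier_add_half_inv_index (neg_ne_zero.mpr hn) Real.two_pi_pos)
lemma parseval' {g : UnitCircle → ℂ} (hg : MemLp g 2 μ) :
    ∑' i : ℤ, (‖fourierCoeff g i‖₊ : ℝ≥0∞) ^ 2 = eLpNorm g 2 μ ^ 2 := by
  set gL := hg.toLp g with hgL
  have hae : (gL : UnitCircle → ℂ) =ᵐ[μ] g := hg.coeFn_toLp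
  have hrepr : ∀ i : ℤ, ‖fourierBasis.repr gL i‖ = ‖fourierCoeff g i‖ := fun i => by
    rw [fourierBasis_repr, fourierCoeff_congr_ae' hae]
  have hsum : Summable fun i : ℤ => ‖fourierCoeff g i‖ ^ (2 : ℝ) := by
    have h := (memℓp_gen_iff (p := 2) (by norm_num)).1 (lp.memℓp (fourierBasis.repr gL))
    simpa [hrepr] using h
  have hnorm : ‖gL‖ ^ (2 : ℝ) = ∑' i : ℤ, ‖fourierCoeff g i‖ ^ (2 : ℝ) := by
    have h1 := lp.norm_rpow_eq_tsum (p := 2) (by norm_num) (fourierBasis.repr gL)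
    have h2 : ‖fourierBasis.repr gL‖ = ‖gL‖ := by simp
    rw [h2] at h1
    simpa [hrepr] using h1
  have helq : eLpNorm g 2 μ = ENNReal.ofReal ‖gL‖ := by
    rw [Lp.norm_def, ENNReal.ofReal_toReal (Lp.eLpNorm_ne_top gL), eLpNorm_congr_ae hae]
  calc ∑' i : ℤ, (‖fourierCoeff g i‖₊ : ℝ≥0∞) ^ 2
      = ∑' i : ℤ, ENNReal.ofReal (‖fourierCoeff g i‖ ^ (2 : ℝ)) := by
        refine tsum_congr fun i => ?_
        rw [Real.rpow_two, ENNReal.ofReal_pow (norm_nonneg _), ofReal_norm, enorm_eq_nnnorm]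
    _ = ENNReal.ofReal (∑' i : ℤ, ‖fourierCoeff g i‖ ^ (2 : ℝ)) :=
        (ENNReal.ofReal_tsum_of_nonneg (fun i => Real.rpow_nonneg (norm_nonneg _) _) hsum).symm
    _ = ENNReal.ofReal (‖gL‖ ^ (2 : ℝ)) := by rw [hnorm]
    _ = eLpNorm g 2 μ ^ 2 := by
        rw [Real.rpow_two, ENNReal.ofReal_pow (norm_nonneg _), helq]
lemma negPartNorm_le {g : UnitCircle → ℂ} (hg : MemLp g 2 μ) :
    negPartNorm g ≤ eLpNorm g 2 μ := by
  have hinj : Function.Injective (fun n : ℕ => -(n : ℤ)) :=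
    fun a b h => by simpa using h
  have h1 : ∑' n : ℕ, (‖fourierCoeff g (-(n : ℤ))‖₊ : ℝ≥0∞) ^ 2
      ≤ ∑' i : ℤ, (‖fourierCoeff g i‖₊ : ℝ≥0∞) ^ 2 :=
    ENNReal.tsum_comp_le_tsum_of_injective hinj _
  calc negPartNorm g ≤ (∑' i : ℤ, (‖fourierCoeff g i‖₊ : ℝ≥0∞) ^ 2) ^ (1 / 2 : ℝ) :=
        ENNReal.rpow_le_rpow h1 (by norm_num)
    _ = (eLpNorm g 2 μ ^ 2) ^ (1 / 2 : ℝ) := by rw [parseval' hg]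
    _ = eLpNorm g 2 μ := by
        rw [← ENNReal.rpow_natCast (eLpNorm g 2 μ) 2, ← ENNReal.rpow_mul]
        norm_num

lemma negPartNorm_conj {φ : UnitCircle → ℂ} (hφ : MemHardy 2 φ) :
    negPartNorm (fun x => conj (φ x)) = eLpNorm φ 2 μ := by
  have hterm : ∀ n : ℕ, (‖fourierCoeff (fun x => conj (φ x)) (-(n : ℤ))‖₊ : ℝ≥0∞) ^ 2
      = (‖fourierCoeff φ (n : ℤ)‖₊ : ℝ≥0∞) ^ 2 := fun n => by
    rw [fourierCoeff_conj', neg_neg, RCLike.nnnorm_conj]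
  have hzero : ∀ i : ℤ, i ∉ Set.range (fun n : ℕ => (n : ℤ)) →
      (‖fourierCoeff φ i‖₊ : ℝ≥0∞) ^ 2 = 0 := by
    intro i hi
    have : i < 0 := by
      by_contra hlt
      exact hi ⟨i.toNat, by simpa using Int.toNat_of_nonneg (by omega)⟩
    rw [hφ.2 i this]
    simp
  have hsum : ∑' n : ℕ, (‖fourierCoeff φ (n : ℤ)‖₊ : ℝ≥0∞) ^ 2
      = ∑' i : ℤ, (‖fourierCoeff φ i‖₊ : ℝ≥0∞) ^ 2 := by
    refine Function.Injective.tsum_eq (g := fun n : ℕ => (n : ℤ))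
      (f := fun i : ℤ => (‖fourierCoeff φ i‖₊ : ℝ≥0∞) ^ 2) (fun a b h => by simpa using h) ?_
    intro i hi
    by_contra hr
    exact hi (hzero i hr)
  unfold negPartNorm
  rw [tsum_congr hterm, hsum, parseval' hφ.1,
    ← ENNReal.rpow_natCast (eLpNorm φ 2 μ) 2, ← ENNReal.rpow_mul]
  norm_num
lemma fourierCoeff_const_mul (a : ℂ) (f : UnitCircle → ℂ) (n : ℤ) :
    fourierCoeff (fun x => a * f x) n = a * fourierCoeff f n := by
  calc fourierCoeff (fun x => a * f x) n
      = ∫ t : UnitCircle, a • (fourier (-n) t • f t) ∂μ := by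
        unfold fourierCoeff
        refine integral_congr_ae (Eventually.of_forall fun t => ?_)
        simp only [smul_eq_mul]
        ring
    _ = a * fourierCoeff f n := by rw [integral_smul]; rfl

lemma one_memHardy : MemHardy ⊤ (fun _ : UnitCircle => (1 : ℂ)) :=
  ⟨memLp_const 1, fun n hn => fourierCoeff_one (by omega)⟩

lemma le_hankelNorm {φ : UnitCircle → ℂ} (hφ : MemHardy 2 φ) :
    eLpNorm φ 2 μ ≤ hankelNorm φ := by
  have hμ : (μ : Measure UnitCircle) ≠ 0 := IsProbabilityMeasure.ne_zero μ
  have h1 : eLpNorm (fun _ : UnitCircle => (1 : ℂ)) 2 μ ≤ 1 := by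
    rw [eLpNorm_const _ (by norm_num) hμ]
    simp
  have h2 : negPartNorm (fun x => conj (φ x) * (fun _ : UnitCircle => (1 : ℂ)) x)
      = eLpNorm φ 2 μ := by
    simpa using negPartNorm_conj hφ
  rw [← h2, hankelNorm]
  refine le_iSup_of_le (fun _ => (1 : ℂ)) ?_
  refine le_iSup_of_le one_memHardy ?_
  exact le_iSup_of_le h1 le_rfl

lemma hankelNorm_le_of_norm_const {φ : UnitCircle → ℂ} {c : ℝ} (hc : 0 ≤ c)
    (hφ : MemLp φ 2 μ) (h : ∀ᵐ x ∂μ, ‖φ x‖ = c) :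
    hankelNorm φ ≤ ENNReal.ofReal c := by
  refine iSup_le fun f => iSup_le fun hf => iSup_le fun hf1 => ?_
  have haem : AEStronglyMeasurable (fun x => conj (φ x) * f x) μ :=
    (RCLike.continuous_conj.comp_aestronglyMeasurable hφ.aestronglyMeasurable).mul
      hf.1.aestronglyMeasurable
  have hb : ∀ᵐ x ∂μ, ‖conj (φ x) * f x‖ ≤ ‖(c : ℂ) * f x‖ := by
    filter_upwards [h] with x hx
    simp [norm_mul, hx, _root_.abs_of_nonneg hc]
  have h2 : eLpNorm (fun x => conj (φ x) * f x) 2 μ ≤ ENNReal.ofReal c := by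
    calc eLpNorm (fun x => conj (φ x) * f x) 2 μ
        ≤ eLpNorm (fun x => (c : ℂ) * f x) 2 μ := eLpNorm_mono_ae hb
      _ = (‖(c : ℂ)‖₊ : ℝ≥0∞) * eLpNorm f 2 μ := by
          rw [← enorm_eq_nnnorm]; exact eLpNorm_const_smul (c : ℂ) f 2 μ
      _ ≤ ENNReal.ofReal c * 1 := by
          refine mul_le_mul' (le_of_eq ?_) hf1
          rw [show ((‖(c : ℂ)‖₊ : ℝ≥0∞)) = (‖c‖₊ : ℝ≥0∞) by rw [Complex.nnnorm_real],
            ← enorm_eq_nnnorm, Real.enorm_eq_ofReal hc]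
      _ = ENNReal.ofReal c := mul_one _
  have hmem : MemLp (fun x => conj (φ x) * f x) 2 μ :=
    ⟨haem, lt_of_le_of_lt h2 ENNReal.ofReal_lt_top⟩
  exact (negPartNorm_le hmem).trans h2

lemma eLpNorm_of_norm_ae_const {φ : UnitCircle → ℂ} {c : ℝ} {p : ℝ≥0∞} (hp : p ≠ 0)
    (hc : 0 ≤ c) (h : ∀ᵐ x ∂μ, ‖φ x‖ = c) : eLpNorm φ p μ = ENNReal.ofReal c := by
  have hμ : (μ : Measure UnitCircle) ≠ 0 := IsProbabilityMeasure.ne_zero μ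
  calc eLpNorm φ p μ = eLpNorm (fun x => ‖φ x‖) p μ := (eLpNorm_norm φ).symm
    _ = eLpNorm (fun _ : UnitCircle => c) p μ := eLpNorm_congr_ae h
    _ = (‖c‖₊ : ℝ≥0∞) * (μ Set.univ) ^ (1 / ENNReal.toReal p) :=
        eLpNorm_const c hp hμ
    _ = ENNReal.ofReal c := by
        rw [← enorm_eq_nnnorm]; simp [measure_univ, Real.enorm_eq_ofReal hc]
lemma norm_ae_const_of_eq {φ : UnitCircle → ℂ} (hφ : MemLp φ 2 μ)
    (h : eLpNorm φ 2 μ = eLpNorm φ ⊤ μ) : ∃ c : ℝ, ∀ᵐ x ∂μ, ‖φ x‖ = c := by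
  set M := eLpNorm φ ⊤ μ with hM
  have hMlt : M < ⊤ := h ▸ hφ.2
  refine ⟨M.toReal, ?_⟩
  have hle : ∀ᵐ x ∂μ, (‖φ x‖₊ : ℝ≥0∞) ≤ M := by
    rw [hM, eLpNorm_exponent_top]
    exact ae_le_eLpNormEssSup
  have hle2 : (fun x => (‖φ x‖₊ : ℝ≥0∞) ^ (2 : ℝ)) ≤ᵐ[μ] fun _ => M ^ (2 : ℝ) :=
    hle.mono fun x hx => ENNReal.rpow_le_rpow hx (by norm_num)
  have h2 : eLpNorm φ 2 μ = (∫⁻ x, (‖φ x‖₊ : ℝ≥0∞) ^ (2 : ℝ) ∂μ) ^ (1 / 2 : ℝ) := by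
    rw [eLpNorm_eq_lintegral_rpow_enorm_toReal (by norm_num) (by norm_num)]
    simp_rw [← enorm_eq_nnnorm]
    norm_num
  have hint : ∫⁻ x, (‖φ x‖₊ : ℝ≥0∞) ^ (2 : ℝ) ∂μ = M ^ (2 : ℝ) := by
    have h3 := congrArg (fun z : ℝ≥0∞ => z ^ (2 : ℝ)) (h2.symm.trans h)
    simp only [← ENNReal.rpow_mul] at h3
    norm_num at h3
    simp only [ENNReal.rpow_two]
    exact h3
  have hintconst : ∫⁻ _ : UnitCircle, M ^ (2 : ℝ) ∂μ = M ^ (2 : ℝ) := by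
    simp [measure_univ]
  have hae : (fun x => (‖φ x‖₊ : ℝ≥0∞) ^ (2 : ℝ)) =ᵐ[μ] fun _ => M ^ (2 : ℝ) := by
    refine ae_eq_of_ae_le_of_lintegral_le hle2 ?_ aemeasurable_const ?_
    · rw [hint]
      exact (ENNReal.rpow_lt_top_of_nonneg (by norm_num) hMlt.ne).ne
    · rw [hint, hintconst]
  filter_upwards [hae] with x hx
  have hx2 : (‖φ x‖₊ : ℝ≥0∞) = M := by
    have h4 := congrArg (fun z : ℝ≥0∞ => z ^ ((2 : ℝ)⁻¹)) hx
    simp only [← ENNReal.rpow_mul] at h4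
    norm_num at h4
    exact h4
  have h5 := congrArg ENNReal.toReal hx2
  simpa using h5
/-- For `φ ∈ H²` the following are equivalent: (i) `H_φ` has both minimal and maximal norm;
(ii) `‖φ‖₂ = ‖φ‖_∞`; (iii) `|φ|` is constant almost everywhere on the circle;
(iv) `φ = C·I` (a.e.) for a constant `C` and an inner function `I`. -/
theorem minimal_and_maximal_tfae (φ : UnitCircle → ℂ) (hφ : MemHardy 2 φ) :
    List.TFAE
      [hankelNorm φ = eLpNorm φ 2 μ ∧ hankelNorm φ = eLpNorm φ ⊤ μ,
       eLpNorm φ 2 μ = eLpNorm φ ⊤ μ,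
       ∃ c : ℝ, ∀ᵐ x ∂μ, ‖φ x‖ = c,
       ∃ (C : ℂ) (I : UnitCircle → ℂ), MemHardy 2 I ∧ (∀ᵐ x ∂μ, ‖I x‖ = 1) ∧
         ∀ᵐ x ∂μ, φ x = C * I x] := by
  have hμ : (μ : Measure UnitCircle) ≠ 0 := IsProbabilityMeasure.ne_zero μ
  have hne : (ae (μ : Measure UnitCircle)).NeBot := ae_neBot.mpr hμ
  tfae_have 1 → 2 := fun h => h.1.symm.trans h.2
  tfae_have 2 → 3 := fun h => norm_ae_const_of_eq hφ.1 h
  tfae_have 3 → 4 := by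
    rintro ⟨c, hc⟩
    have hc0 : 0 ≤ c := by
      obtain ⟨x, hx⟩ := hc.exists
      rw [← hx]; exact norm_nonneg _
    rcases eq_or_lt_of_le hc0 with hc0' | hcpos
    · refine ⟨0, fun _ => 1, ⟨memLp_const 1, fun n hn => fourierCoeff_one (by omega)⟩, Eventually.of_forall fun x => by simp,
        hc.mono fun x hx => ?_⟩
      have hx0 : ‖φ x‖ = 0 := by rw [hx, ← hc0']
      simp [norm_eq_zero.mp hx0]
    · refine ⟨(c : ℂ), fun x => ((c : ℂ))⁻¹ * φ x, ⟨hφ.1.const_mul _, fun n hn => ?_⟩,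
        hc.mono fun x hx => ?_, Eventually.of_forall fun x => ?_⟩
      · rw [fourierCoeff_const_mul, hφ.2 n hn, mul_zero]
      · have hcne : (c : ℂ) ≠ 0 := by
          exact_mod_cast ne_of_gt hcpos
        rw [norm_mul, hx, norm_inv, Complex.norm_real, Real.norm_of_nonneg hc0,
          inv_mul_cancel₀ (ne_of_gt hcpos)]
      · have hcne : (c : ℂ) ≠ 0 := by
          exact_mod_cast ne_of_gt hcpos
        field_simp
  tfae_have 4 → 3 := by
    rintro ⟨C, I, hI, hInorm, hCI⟩
    refine ⟨‖C‖, ?_⟩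
    filter_upwards [hInorm, hCI] with x h1 h2
    rw [h2, norm_mul, h1, mul_one]
  tfae_have 3 → 1 := by
    rintro ⟨c, hc⟩
    have hc0 : 0 ≤ c := by
      obtain ⟨x, hx⟩ := hc.exists
      rw [← hx]; exact norm_nonneg _
    have h2 := eLpNorm_of_norm_ae_const (p := 2) (by norm_num) hc0 hc
    have htop := eLpNorm_of_norm_ae_const (p := ⊤) (by norm_num) hc0 hc
    have hh : hankelNorm φ = ENNReal.ofReal c :=
      le_antisymm (hankelNorm_le_of_norm_const hc0 hφ.1 hc)
        (h2 ▸ le_hankelNorm hφ)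
    exact ⟨hh.trans h2.symm, hh.trans htop.symm⟩
  tfae_finish
end
end

section
/- Let φ ∈ H^∞, f ∈ H^∞_0 and 0 < ε < 1 satisfy ‖φ − f̄‖_∞ = ε‖φ‖_∞, and set δ = (1+ε)/2. Then almost everywhere on the super-level set L_φ^+(δ) one has |f| ≥ (1−ε)‖φ‖_∞/2, and moreover ‖f‖_∞ ≤ (1+ε)‖φ‖_∞ and |Arg(φ f)| ≤ arccos((1−ε)/4) < π/2 almost everywhere on L_φ^+(δ). -/
/-!
Setting: the unit circle `𝕋 = ℝ/2πℤ` with normalized Lebesgue arc length (Haar) measure `μ`.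
`H^p` is the Hardy space of `L^p` functions whose Fourier coefficients are supported on the
nonnegative integers.
-/

open MeasureTheory Complex Topology Filter Set
open scoped ENNReal ComplexConjugate Real

noncomputable section

/-- Normalized Lebesgue arc length measure on the unit circle. -/
local notation "μ" => (AddCircle.haarAddCircle : Measure UnitCircle)

/-- The essential supremum norm `‖f‖_∞` of a function on the circle, as a real number. -/
def supNorm {E : Type*} [NormedAddCommGroup E] (f : UnitCircle → E) : ℝ := (eLpNorm f ⊤ μ).toReal

/-- The super-level set `L_f^+(δ) = {x ∈ 𝕋 : |f(x)| ≥ ‖f‖_∞ δ}`. -/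
def Lplus {E : Type*} [NormedAddCommGroup E] (f : UnitCircle → E) (δ : ℝ) : Set UnitCircle :=
  {x | supNorm f * δ ≤ ‖f x‖}

/-- The sub-level set `L_f^-(δ) = {x ∈ 𝕋 : |f(x)| < ‖f‖_∞ δ}`. -/
def Lminus {E : Type*} [NormedAddCommGroup E] (f : UnitCircle → E) (δ : ℝ) : Set UnitCircle :=
  {x | ‖f x‖ < supNorm f * δ}

lemma arccos_antitone : Antitone Real.arccos := fun x y h => by
  simp only [Real.arccos]
  have := Real.monotone_arcsin h
  linarith

/-- If `φ ∈ H^∞`, `f ∈ H^∞_0` and `0 < ε < 1` satisfy `‖φ - conj f‖_∞ = ε‖φ‖_∞`, then with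
`δ = (1+ε)/2`: almost everywhere on `L_φ^+(δ)` one has `|f| ≥ (1-ε)‖φ‖_∞/2`; moreover
`‖f‖_∞ ≤ (1+ε)‖φ‖_∞`, and `|Arg (φ f)| ≤ arccos((1-ε)/4) < π/2` almost everywhere on
`L_φ^+(δ)`. -/
theorem lower_bounds_on_superLevelSet (φ f : UnitCircle → ℂ) (ε : ℝ)
    (hφ : MemHardy ⊤ φ) (hf : MemHardy ⊤ f) (hf0 : fourierCoeff f 0 = 0)
    (hε0 : 0 < ε) (hε1 : ε < 1)
    (hdist : supNorm (fun x => φ x - conj (f x)) = ε * supNorm φ) :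
    (∀ᵐ x ∂μ, x ∈ Lplus φ ((1 + ε) / 2) → (1 - ε) * supNorm φ / 2 ≤ ‖f x‖) ∧
      supNorm f ≤ (1 + ε) * supNorm φ ∧
      (∀ᵐ x ∂μ, x ∈ Lplus φ ((1 + ε) / 2) →
        |Complex.arg (φ x * f x)| ≤ Real.arccos ((1 - ε) / 4)) ∧
      Real.arccos ((1 - ε) / 4) < Real.pi / 2 := by
  set M := supNorm φ with hM
  have hMnn : 0 ≤ M := ENNReal.toReal_nonneg
  -- a.e. bound for φ
  have hφtop : eLpNorm φ ⊤ μ ≠ ⊤ := hφ.1.eLpNorm_ne_top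
  have hφbd : ∀ᵐ x ∂μ, ‖φ x‖ ≤ M := by
    filter_upwards [(ae_le_eLpNormEssSup : ∀ᵐ y ∂μ, ‖φ y‖₊ ≤ eLpNormEssSup φ μ)] with x hx
    have : ((‖φ x‖₊ : ℝ≥0∞)).toReal ≤ (eLpNormEssSup φ μ).toReal :=
      ENNReal.toReal_mono (by rwa [← eLpNorm_exponent_top]) hx
    simpa [hM, supNorm, eLpNorm_exponent_top] using this
  have hdtop : eLpNorm (fun x => φ x - conj (f x)) ⊤ μ ≠ ⊤ := by
    have : MemLp (fun x => φ x - conj (f x)) ⊤ μ := by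
      apply MemLp.sub hφ.1
      exact (Complex.conjCLE : ℂ ≃L[ℝ] ℂ).toContinuousLinearMap.comp_memLp' hf.1
    exact this.eLpNorm_ne_top
  have hdbd : ∀ᵐ x ∂μ, ‖φ x - conj (f x)‖ ≤ ε * M := by
    filter_upwards [(ae_le_eLpNormEssSup : ∀ᵐ y ∂μ, ‖φ y - conj (f y)‖₊ ≤ eLpNormEssSup (fun x => φ x - conj (f x)) μ)] with x hx
    have : ((‖φ x - conj (f x)‖₊ : ℝ≥0∞)).toReal
        ≤ (eLpNormEssSup (fun x => φ x - conj (f x)) μ).toReal :=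
      ENNReal.toReal_mono (by rwa [← eLpNorm_exponent_top]) hx
    rw [← hdist]
    simpa [supNorm, eLpNorm_exponent_top] using this
  -- a.e. bound for f
  have hfbd : ∀ᵐ x ∂μ, ‖f x‖ ≤ (1 + ε) * M := by
    filter_upwards [hφbd, hdbd] with x h1 h2
    have : ‖f x‖ = ‖conj (f x)‖ := (RCLike.norm_conj _).symm
    rw [this]
    calc ‖conj (f x)‖ = ‖φ x - (φ x - conj (f x))‖ := by ring_nf
      _ ≤ ‖φ x‖ + ‖φ x - conj (f x)‖ := norm_sub_le _ _
      _ ≤ (1 + ε) * M := by linarith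
  have hεM : 0 ≤ (1 + ε) * M := by positivity
  refine ⟨?_, ?_, ?_, ?_⟩
  · filter_upwards [hdbd] with x h2 hx
    have hx' : M * ((1 + ε) / 2) ≤ ‖φ x‖ := hx
    have : ‖φ x‖ - ‖φ x - conj (f x)‖ ≤ ‖conj (f x)‖ := by
      have := norm_sub_norm_le (φ x) (φ x - conj (f x))
      simpa using this
    rw [RCLike.norm_conj] at this
    nlinarith
  · have : eLpNorm f ⊤ μ ≤ ENNReal.ofReal ((1 + ε) * M) := by
      rw [eLpNorm_exponent_top]
      exact eLpNormEssSup_le_of_ae_bound hfbd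
    calc supNorm f ≤ (ENNReal.ofReal ((1 + ε) * M)).toReal :=
          ENNReal.toReal_mono ENNReal.ofReal_ne_top this
      _ = (1 + ε) * M := ENNReal.toReal_ofReal hεM
  · filter_upwards [hφbd, hdbd] with x h1 h2 hx
    have hx' : M * ((1 + ε) / 2) ≤ ‖φ x‖ := hx
    by_cases hM0 : M = 0
    · have hφ0 : φ x = 0 := by
        have : ‖φ x‖ ≤ 0 := le_trans h1 (le_of_eq hM0)
        simpa using le_antisymm this (norm_nonneg _)
      simp [hφ0, Real.arccos_nonneg]
    have hMpos : 0 < M := lt_of_le_of_ne hMnn (Ne.symm hM0)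
    have hφpos : 0 < ‖φ x‖ := lt_of_lt_of_le (by nlinarith) hx'
    have hfnorm : (1 - ε) * M / 2 ≤ ‖f x‖ := by
      have : ‖φ x‖ - ‖φ x - conj (f x)‖ ≤ ‖conj (f x)‖ := by
        simpa using norm_sub_norm_le (φ x) (φ x - conj (f x))
      rw [RCLike.norm_conj] at this
      nlinarith
    have hfpos : 0 < ‖f x‖ := lt_of_lt_of_le (by nlinarith) hfnorm
    have hfub : ‖f x‖ ≤ (1 + ε) * M := by
      have : ‖φ x - (φ x - conj (f x))‖ ≤ ‖φ x‖ + ‖φ x - conj (f x)‖ := norm_sub_le _ _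
      simp only [sub_sub_cancel] at this
      rw [RCLike.norm_conj] at this
      linarith
    set z := φ x * f x with hz
    have hzne : z ≠ 0 := mul_ne_zero (norm_pos_iff.mp hφpos) (norm_pos_iff.mp hfpos)
    -- real part bound
    have hsplit : z = (‖φ x‖)^2 - φ x * conj (φ x - conj (f x)) := by
      have : ((‖φ x‖ : ℂ)) ^ 2 = (φ x) * conj (φ x) := by
        rw [Complex.mul_conj]
        norm_cast
        exact Complex.sq_norm _
      rw [this, hz]
      simp [map_sub]
      ring
    have hre : (‖φ x‖)^2 - ‖φ x‖ * (ε * M) ≤ z.re := by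
      rw [hsplit]
      have h3 : (φ x * conj (φ x - conj (f x))).re ≤ ‖φ x‖ * (ε * M) := by
        calc (φ x * conj (φ x - conj (f x))).re
            ≤ ‖φ x * conj (φ x - conj (f x))‖ := Complex.re_le_norm _
          _ = ‖φ x‖ * ‖φ x - conj (f x)‖ := by
              rw [norm_mul, Complex.norm_conj]
          _ ≤ ‖φ x‖ * (ε * M) := by
              apply mul_le_mul_of_nonneg_left _ (norm_nonneg _)
              simpa using h2
      have : ((‖φ x‖ : ℂ)^2 - φ x * conj (φ x - conj (f x))).re
          = (‖φ x‖)^2 - (φ x * conj (φ x - conj (f x))).re := by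
        simp [Complex.sub_re, ← Complex.ofReal_pow]
      push_cast
      rw [this]
      linarith
    have habsz : ‖z‖ = ‖φ x‖ * ‖f x‖ := norm_mul _ _
    have hcos : (1 - ε) / 4 ≤ Real.cos (Complex.arg z) := by
      rw [Complex.cos_arg hzne]
      rw [le_div_iff₀ (norm_pos_iff.mpr hzne)]
      rw [habsz]
      have hA : ‖φ x‖ = ‖φ x‖ := rfl
      have hB : ‖f x‖ = ‖f x‖ := rfl
      rw [hA, hB]
      rw [hA] at hre
      have k1 : (1 - ε)/4 * ‖f x‖ ≤ (1 - ε) * M / 2 := by nlinarith [norm_nonneg (f x)]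
      have k2 : (1 - ε) * M / 2 ≤ ‖φ x‖ - ε * M := by nlinarith
      nlinarith [mul_le_mul_of_nonneg_left (k1.trans k2) hφpos.le, hre]
    have habs : |Complex.arg z| = Real.arccos (Real.cos |Complex.arg z|) :=
      (Real.arccos_cos (abs_nonneg _) (Complex.abs_arg_le_pi _)).symm
    rw [habs, Real.cos_abs]
    exact arccos_antitone hcos
  · rw [Real.arccos_lt_pi_div_two]
    linarith
end
end

section
/- For 0 < a ≤ 1 and 0 < b ≤ 1/2, the open set U = ∪_{n≥1} {e^{iθ} : 2^{−n} < θ < 2^{−n} + a·b^n} ⊂ T is thin if and only if b < 1/2. -/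
/-!
Setting: the unit circle `𝕋 = ℝ/2πℤ` with normalized Lebesgue arc length (Haar) measure `μ`.
`H^p` is the Hardy space of `L^p` functions whose Fourier coefficients are supported on the
nonnegative integers.
-/

open MeasureTheory Complex Topology Filter Set
open scoped ENNReal ComplexConjugate Real

noncomputable section

/-- Normalized Lebesgue arc length measure on the unit circle. -/
local notation "μ" => (AddCircle.haarAddCircle : Measure UnitCircle)

/-- The open arc `Γ_n` of the circle with midpoint `e^{i c n}` and angular half-length `r n`;
its normalized measure is `|Γ_n| = r n / π`. -/
def arcAt (c r : ℕ → ℝ) (n : ℕ) : Set UnitCircle :=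
  (fun θ : ℝ => (θ : UnitCircle)) '' Set.Ioo (c n - r n) (c n + r n)

/-- The arc `½Γ_n` concentric to `Γ_n` with `|½Γ_n| = ½|Γ_n|`. -/
def halfArcAt (c r : ℕ → ℝ) (n : ℕ) : Set UnitCircle :=
  (fun θ : ℝ => (θ : UnitCircle)) '' Set.Ioo (c n - r n / 2) (c n + r n / 2)

/-- The open set `U = ⋃ Γ_n` determined by the disjoint arcs `Γ_n` (midpoints `c n`, angular
half-lengths `r n`) is *thin*:
`sup_{x ∈ 𝕋∖U} ∑ₙ |Γ_n| / dist(x, ½Γ_n) < ∞` (computed in `ℝ≥0∞`, so a term with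
`dist(x, ½Γ_n) = 0` and `|Γ_n| > 0` counts as `∞`). -/
def IsThin (c r : ℕ → ℝ) : Prop :=
  ∃ M : ℝ≥0∞, M ≠ ⊤ ∧ ∀ x : UnitCircle, x ∉ ⋃ n, arcAt c r n →
    ∑' n, ENNReal.ofReal (r n / Real.pi) / EMetric.infEdist x (halfArcAt c r n) ≤ M

/-! ### Auxiliary lemmas -/

lemma UC.dist_coe_le (u v : ℝ) : dist (↑u : UnitCircle) ↑v ≤ |u - v| := by
  rw [dist_eq_norm, ← AddCircle.coe_sub]
  simpa using QuotientAddGroup.norm_mk_le_norm (S := AddSubgroup.zmultiples (2 * Real.pi)) (m := u - v)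

lemma UC.norm_coe_eq {c : ℝ} (h0 : 0 ≤ c) (h : c ≤ Real.pi) : ‖(↑c : UnitCircle)‖ = c := by
  rw [(AddCircle.norm_coe_eq_abs_iff (2 * Real.pi) (by positivity)).2, _root_.abs_of_nonneg h0]
  rw [_root_.abs_of_nonneg h0, _root_.abs_of_nonneg Real.two_pi_pos.le]
  linarith

lemma UC.mem_arc_of_dist_lt {c r : ℝ} (x : UnitCircle) (h : dist x (↑c : UnitCircle) < r) :
    x ∈ (fun θ : ℝ => (θ : UnitCircle)) '' Set.Ioo (c - r) (c + r) := by
  obtain ⟨ψ, rfl⟩ := QuotientAddGroup.mk_surjective x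
  rw [dist_eq_norm, ← AddCircle.coe_sub, AddCircle.norm_eq] at h
  refine ⟨ψ - round ((2 * Real.pi)⁻¹ * (ψ - c)) * (2 * Real.pi), ?_, ?_⟩
  · constructor <;> [nlinarith [abs_lt.1 h]; nlinarith [abs_lt.1 h]]
  · rw [QuotientAddGroup.eq_iff_sub_mem]
    exact ⟨-(round ((2 * Real.pi)⁻¹ * (ψ - c))), by
      simp only [zsmul_eq_mul]; push_cast; ring⟩

/-- For `0 < a ≤ 1` and `0 < b ≤ 1/2`, the open set
`U = ⋃_{n ≥ 1} {e^{iθ} : 2⁻ⁿ < θ < 2⁻ⁿ + a bⁿ}` (arcs with midpoints `2⁻ⁿ + a bⁿ/2` and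
angular half-lengths `a bⁿ/2`) is thin if and only if `b < 1/2`. -/
theorem isThin_iff (a b : ℝ) (ha0 : 0 < a) (ha1 : a ≤ 1) (hb0 : 0 < b) (hb1 : b ≤ 1 / 2) :
    IsThin (fun n => (1 / 2 : ℝ) ^ (n + 1) + a * b ^ (n + 1) / 2)
      (fun n => a * b ^ (n + 1) / 2) ↔ b < 1 / 2 := by
  set cf : ℕ → ℝ := fun n => (1 / 2 : ℝ) ^ (n + 1) + a * b ^ (n + 1) / 2 with hcf
  set rf : ℕ → ℝ := fun n => a * b ^ (n + 1) / 2 with hrf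
  clear_value cf rf
  have hpi := Real.pi_pos
  have hpi_gt : (3:ℝ) < Real.pi := by
    have := Real.pi_gt_d6; linarith
  have hq : ∀ n : ℕ, (0:ℝ) < (1/2:ℝ) ^ (n+1) := fun n => by positivity
  have hrpos : ∀ n, 0 < rf n := fun n => by simp only [hrf]; positivity
  have hble : ∀ n : ℕ, b ^ (n+1) ≤ (1/2:ℝ) ^ (n+1) :=
    fun n => pow_le_pow_left₀ hb0.le hb1 _
  have hrle : ∀ n, rf n ≤ (1/2:ℝ) ^ (n+2) := by
    intro n
    have := hble n
    simp only [hrf]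
    have : a * b ^ (n+1) ≤ 1 * (1/2:ℝ)^(n+1) := by
      apply mul_le_mul ha1 (hble n) (by positivity) zero_le_one
    calc a * b ^ (n+1) / 2 ≤ 1 * (1/2:ℝ)^(n+1) / 2 := by linarith
    _ = (1/2:ℝ)^(n+2) := by ring
  have hcl : ∀ n, (1/2:ℝ)^(n+1) ≤ cf n := fun n => by
    have h : (0:ℝ) < a * b ^ (n+1) / 2 := by positivity
    simp only [hcf]; linarith
  have hcu : ∀ n, cf n ≤ 3 * (1/2:ℝ)^(n+2) := by
    intro n
    have h1 := hrle n
    simp only [hcf]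
    have : (1/2:ℝ)^(n+1) = 2 * (1/2:ℝ)^(n+2) := by ring
    simp only [hrf] at h1
    linarith
  have hpow_le : ∀ n : ℕ, (1/2:ℝ)^(n+2) ≤ 1/4 := by
    intro n
    calc (1/2:ℝ)^(n+2) ≤ (1/2:ℝ)^2 := by
          apply pow_le_pow_of_le_one (by norm_num) (by norm_num) (by omega)
    _ = 1/4 := by norm_num
  have hcpi : ∀ n, cf n ≤ Real.pi := fun n => by
    have h1 := hcu n; have h2 := hpow_le n; linarith
  have hc0 : ∀ n, 0 ≤ cf n := fun n => le_trans (hq n).le (hcl n)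
  -- distance from excluded point to arc center is at least rf n
  have harc : ∀ (x : UnitCircle) (n : ℕ), x ∉ arcAt cf rf n →
      rf n ≤ dist x ((cf n : ℝ) : UnitCircle) := by
    intro x n hx
    by_contra hlt
    exact hx (UC.mem_arc_of_dist_lt x (not_le.1 hlt))
  constructor
  · -- IsThin → b < 1/2
    intro ⟨M, hM, hbd⟩
    by_contra hlt
    have hb : b = 1/2 := le_antisymm hb1 (not_lt.1 hlt)
    subst hb
    have h0 : (0:UnitCircle) ∉ ⋃ n, arcAt cf rf n := by
      rw [Set.mem_iUnion]
      rintro ⟨n, θ, hθ, hcoe⟩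
      rw [AddCircle.coe_eq_zero_iff] at hcoe
      obtain ⟨k, hk⟩ := hcoe
      simp only [zsmul_eq_mul] at hk
      have hsub : cf n - rf n = (1/2:ℝ)^(n+1) := by simp only [hcf, hrf]; ring
      have hθ1 : 0 < θ := by
        have h1 := hθ.1
        have h2 := hq n
        linarith
      have hθ2 : θ < 1 := by
        have h1 := hθ.2
        have h2 := hrle n
        have h3 := hcu n
        have h4 := hpow_le n
        linarith
      rcases le_or_gt k 0 with h | h
      · have hk0 : (k:ℝ) ≤ 0 := by exact_mod_cast h
        have : (k:ℝ) * (2*Real.pi) ≤ 0 :=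
          mul_nonpos_of_nonpos_of_nonneg hk0 (by positivity)
        rw [hk] at this
        linarith
      · have hk1 : (1:ℝ) ≤ (k:ℝ) := by exact_mod_cast h
        have : (2:ℝ)*Real.pi ≤ (k:ℝ)*(2*Real.pi) := by nlinarith
        rw [hk] at this
        linarith
    have hlow : ∀ n : ℕ, ENNReal.ofReal (a/(3*Real.pi)) ≤
        ENNReal.ofReal (rf n / Real.pi) / EMetric.infEdist 0 (halfArcAt cf rf n) := by
      intro n
      have hmem : ((cf n : ℝ) : UnitCircle) ∈ halfArcAt cf rf n :=
        ⟨cf n, ⟨by linarith [hrpos n], by linarith [hrpos n]⟩, rfl⟩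
      have hd : dist (0:UnitCircle) ((cf n : ℝ) : UnitCircle) ≤ cf n := by
        have h' := UC.dist_coe_le 0 (cf n)
        rw [zero_sub, abs_neg, _root_.abs_of_nonneg (hc0 n)] at h'
        simpa using h'
      have hinf : EMetric.infEdist 0 (halfArcAt cf rf n) ≤ ENNReal.ofReal (cf n) :=
        le_trans (EMetric.infEdist_le_edist_of_mem hmem)
          (by rw [edist_dist]; exact ENNReal.ofReal_le_ofReal hd)
      have hcpos : 0 < cf n := lt_of_lt_of_le (hq n) (hcl n)
      calc ENNReal.ofReal (a/(3*Real.pi))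
          ≤ ENNReal.ofReal ((rf n / Real.pi) / cf n) := by
            apply ENNReal.ofReal_le_ofReal
            have hqp := hq n
            have hcfe : cf n = (1/2:ℝ)^(n+1) * (1 + a/2) := by simp only [hcf]; ring
            have hrfe : rf n = (1/2:ℝ)^(n+1) * (a/2) := by simp only [hrf]; ring
            rw [hcfe, hrfe, div_div, div_le_div_iff₀ (by positivity) (by positivity)]
            nlinarith [mul_nonneg (mul_nonneg (mul_nonneg ha0.le hpi.le) hqp.le)
              (sub_nonneg.2 ha1)]
        _ = ENNReal.ofReal (rf n / Real.pi) / ENNReal.ofReal (cf n) :=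
            ENNReal.ofReal_div_of_pos hcpos
        _ ≤ _ := ENNReal.div_le_div_left hinf _
    have htop : (⊤ : ℝ≥0∞) ≤ M := by
      refine le_trans ?_ (hbd 0 h0)
      have htsum : (∑' _ : ℕ, ENNReal.ofReal (a/(3*Real.pi))) = (⊤ : ℝ≥0∞) :=
        ENNReal.tsum_const_eq_top_of_ne_zero (by simp; positivity)
      rw [← htsum]
      exact ENNReal.tsum_le_tsum hlow
    exact hM (top_le_iff.1 htop)
  · -- b < 1/2 → IsThin
    intro hb
    have h2b : 2*b < 1 := by linarith
    have h2bpos : 0 < 2*b := by linarith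
    refine ⟨ENNReal.ofReal (2*a/Real.pi * (2*b) * (1 - 2*b)⁻¹)
      + 3 * ENNReal.ofReal (2/Real.pi), by simp [ENNReal.mul_eq_top], ?_⟩
    intro x hx
    set t := dist x (0 : UnitCircle) with ht
    -- termwise bound
    have hterm : ∀ n : ℕ,
        ENNReal.ofReal (rf n / Real.pi) / EMetric.infEdist x (halfArcAt cf rf n) ≤
        ENNReal.ofReal (2*a/Real.pi * (2*b)^(n+1)) +
          (if ((1/2:ℝ)^(n+2) < t ∧ t < 3*(1/2:ℝ)^(n+1)) then ENNReal.ofReal (2/Real.pi) else 0) := by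
      intro n
      have hxn : x ∉ arcAt cf rf n := fun h => hx (Set.mem_iUnion.2 ⟨n, h⟩)
      set D := dist x ((cf n : ℝ) : UnitCircle) with hD
      have hDr : rf n ≤ D := harc x n hxn
      have hDpos : 0 < D := lt_of_lt_of_le (hrpos n) hDr
      -- infEdist lower bound
      have hinf : ENNReal.ofReal (D/2) ≤ EMetric.infEdist x (halfArcAt cf rf n) := by
        rw [show EMetric.infEdist x (halfArcAt cf rf n) = Metric.infEDist x (halfArcAt cf rf n) from rfl, Metric.le_infEDist]
        rintro y ⟨θ, hθ, rfl⟩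
        rw [edist_dist]
        apply ENNReal.ofReal_le_ofReal
        have h1 : dist ((θ:ℝ) : UnitCircle) ((cf n : ℝ) : UnitCircle) ≤ rf n / 2 := by
          refine le_trans (UC.dist_coe_le θ (cf n)) ?_
          rw [abs_le]; constructor <;> [linarith [hθ.1]; linarith [hθ.2]]
        have htri := dist_triangle x ((θ:ℝ) : UnitCircle) ((cf n : ℝ) : UnitCircle)
        rw [← hD] at htri
        linarith
      have heq : (rf n / Real.pi) / (D/2) = (2/Real.pi) * (rf n / D) := by
        field_simp
      have hstep : ENNReal.ofReal (rf n / Real.pi) / EMetric.infEdist x (halfArcAt cf rf n) ≤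
          ENNReal.ofReal ((2/Real.pi) * (rf n / D)) :=
        calc ENNReal.ofReal (rf n / Real.pi) / EMetric.infEdist x (halfArcAt cf rf n)
            ≤ ENNReal.ofReal (rf n / Real.pi) / ENNReal.ofReal (D/2) :=
              ENNReal.div_le_div_left hinf _
          _ = ENNReal.ofReal ((rf n / Real.pi) / (D/2)) :=
              (ENNReal.ofReal_div_of_pos (by linarith)).symm
          _ = ENNReal.ofReal ((2/Real.pi) * (rf n / D)) := by rw [heq]
      -- t vs c n relation
      have hdc : dist ((cf n : ℝ) : UnitCircle) (0:UnitCircle) = cf n := by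
        rw [dist_zero_right, UC.norm_coe_eq (hc0 n) (hcpi n)]
      have habs : |t - cf n| ≤ D := by
        have := abs_dist_sub_le x ((cf n : ℝ) : UnitCircle) (0:UnitCircle)
        rw [hdc, ← ht, ← hD] at this
        exact this
      by_cases hw : ((1/2:ℝ)^(n+2) < t ∧ t < 3*(1/2:ℝ)^(n+1))
      · rw [if_pos hw]
        refine le_trans hstep (le_trans ?_ le_add_self)
        apply ENNReal.ofReal_le_ofReal
        have h1 : rf n / D ≤ 1 := (div_le_one hDpos).2 hDr
        calc (2/Real.pi) * (rf n / D) ≤ (2/Real.pi) * 1 :=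
            mul_le_mul_of_nonneg_left h1 (by positivity)
          _ = 2/Real.pi := mul_one _
      · rw [if_neg hw, add_zero]
        push_neg at hw
        have hDlow : (1/2:ℝ)^(n+2) ≤ D := by
          rcases le_or_gt t ((1/2:ℝ)^(n+2)) with h | h
          · have : cf n - t ≤ |t - cf n| := by rw [abs_sub_comm]; exact le_abs_self _
            have h2 := hcl n
            have : (1/2:ℝ)^(n+1) = 2*(1/2:ℝ)^(n+2) := by ring
            nlinarith [habs]
          · have h3 := hw h
            have : t - cf n ≤ |t - cf n| := le_abs_self _
            have h2 := hcu n
            have he : (1/2:ℝ)^(n+1) = 2*(1/2:ℝ)^(n+2) := by ring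
            nlinarith [habs]
        refine le_trans hstep ?_
        apply ENNReal.ofReal_le_ofReal
        have hqp2 : (0:ℝ) < (1/2:ℝ)^(n+2) := by positivity
        have h21 : (2:ℝ)^n * (1/2:ℝ)^n = 1 := by rw [← mul_pow]; norm_num
        have key : a*(2*b)^(n+1) * (1/2:ℝ)^(n+2) = rf n := by
          simp only [hrf, mul_pow, pow_succ]
          linear_combination (a*b^n*b/2) * h21
        have hdiv : rf n / (1/2:ℝ)^(n+2) = a*(2*b)^(n+1) := by
          rw [div_eq_iff (ne_of_gt hqp2)]
          linarith [key]
        have hstep2 : rf n / D ≤ a * (2*b)^(n+1) := by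
          rw [← hdiv]
          exact div_le_div_of_nonneg_left (hrpos n).le hqp2 hDlow
        have hfin : (2/Real.pi) * (rf n / D) ≤ 2/Real.pi * (a * (2*b)^(n+1)) := by
          apply mul_le_mul_of_nonneg_left hstep2 (by positivity)
        calc (2/Real.pi) * (rf n / D) ≤ 2/Real.pi * (a * (2*b)^(n+1)) := hfin
          _ = 2*a/Real.pi * (2*b)^(n+1) := by ring
    refine le_trans (ENNReal.tsum_le_tsum hterm) ?_
    rw [ENNReal.tsum_add]
    gcongr
    · -- geometric part
      have hnn : ∀ n : ℕ, 0 ≤ 2*a/Real.pi * (2*b)^(n+1) := fun n => by positivity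
      have hfun : (fun n : ℕ => 2*a/Real.pi * (2*b)^(n+1)) =
          (fun n : ℕ => (2*a/Real.pi * (2*b)) * (2*b)^n) := by
        funext n; rw [pow_succ]; ring
      have hsummable : Summable (fun n : ℕ => 2*a/Real.pi * (2*b)^(n+1)) := by
        rw [hfun]
        exact (summable_geometric_of_lt_one h2bpos.le h2b).mul_left _
      rw [← ENNReal.ofReal_tsum_of_nonneg hnn hsummable]
      apply ENNReal.ofReal_le_ofReal
      rw [hfun, tsum_mul_left, tsum_geometric_of_lt_one h2bpos.le h2b]
    · -- window part: at most 3 nonzero terms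
      by_cases hW : ∃ n : ℕ, ((1/2:ℝ)^(n+2) < t ∧ t < 3*(1/2:ℝ)^(n+1))
      · set n0 := Nat.find hW with hn0
        have hw0 := Nat.find_spec hW
        have hsupp : ∀ n : ℕ, n ∉ Finset.Ico n0 (n0+3) →
            (if ((1/2:ℝ)^(n+2) < t ∧ t < 3*(1/2:ℝ)^(n+1)) then ENNReal.ofReal (2/Real.pi) else 0) = 0 := by
          intro n hn
          rw [if_neg]
          intro hwn
          rw [Finset.mem_Ico] at hn
          push_neg at hn
          have hge : n0 ≤ n := Nat.find_min' hW hwn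
          have h3 : n0 + 3 ≤ n := hn hge
          -- contradiction: t < 3*(1/2)^(n+1) ≤ 3*(1/2)^(n0+4) < (1/2)^(n0+2) < t
          have hp1 : (1/2:ℝ)^(n+1) ≤ (1/2:ℝ)^(n0+4) :=
            pow_le_pow_of_le_one (by norm_num) (by norm_num) (by omega)
          have he : (1/2:ℝ)^(n0+2) = 4*(1/2:ℝ)^(n0+4) := by ring
          nlinarith [hwn.2, hw0.1, hq (n0+3)]
        rw [tsum_eq_sum hsupp]
        refine le_trans (Finset.sum_le_card_nsmul _ _ (ENNReal.ofReal (2/Real.pi))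
          (fun n _ => by split <;> simp)) ?_
        rw [Nat.card_Ico]
        simp only [nsmul_eq_mul]
        norm_num
      · push_neg at hW
        have : ∀ n : ℕ, (if ((1/2:ℝ)^(n+2) < t ∧ t < 3*(1/2:ℝ)^(n+1)) then ENNReal.ofReal (2/Real.pi) else 0) = 0 := by
          intro n
          rw [if_neg]
          intro ⟨h1, h2⟩
          exact absurd h2 (not_lt.2 (hW n h1))
        simp only [this, tsum_zero]
        exact zero_le
end
end
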